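/- If one set Ω_k in the cyclic family of maximal output admissible sets is a polyhedron defined by finitely many linear inequalities, then every Ω_i, i ≠ k, is also a polyhedron defined by finitely many inequalities; specifically Ω_i is determined by at most m + (N−1)q inequalities, where m is the number of rows defining Ω_k and q bounds the number of rows of each S_j. -/

import Mathlib

/-!
Writing `Ω_j = {x : S_j C_j x ≤ 1} ∩ A_j⁻¹ Ω_{j+1}`, a polyhedral description `G` of `Ω_{j+1}`
yields one of `Ω_j` by stacking the `q` rows of `S_j C_j` on top of `G A_j`. Walking backwards
around the cycle from `k` reaches any `Ω_i` in at most `N - 1` steps, and zero rows pad the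
description to exactly `m + (N - 1) q` rows.
-/

open Matrix

namespace Matrix

section Polyhedron

variable {ι ι' κ κ' : Type*} [Fintype κ]

def polyhedron (G : Matrix ι κ ℝ) : Set (κ → ℝ) := {x | ∀ r, (G *ᵥ x) r ≤ 1}

@[simp]
theorem mem_polyhedron {G : Matrix ι κ ℝ} {x : κ → ℝ} : x ∈ polyhedron G ↔ ∀ r, (G *ᵥ x) r ≤ 1 :=
  Iff.rfl

@[simp]
theorem polyhedron_zero : polyhedron (0 : Matrix ι κ ℝ) = Set.univ := by
  ext x; simp

theorem polyhedron_mul [Fintype κ'] (G : Matrix ι κ ℝ) (A : Matrix κ κ' ℝ) :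
    polyhedron (G * A) = (A *ᵥ ·) ⁻¹' polyhedron G := by
  ext x; simp [mulVec_mulVec]

theorem polyhedron_fromRows (G₁ : Matrix ι κ ℝ) (G₂ : Matrix ι' κ ℝ) :
    polyhedron (fromRows G₁ G₂) = polyhedron G₁ ∩ polyhedron G₂ := by
  ext x; simp [fromRows_mulVec, Sum.forall]

theorem polyhedron_reindex_rows (e : ι ≃ ι') (G : Matrix ι κ ℝ) :
    polyhedron (G.reindex e (Equiv.refl κ)) = polyhedron G := by
  ext x
  exact e.symm.surjective.forall (p := fun r => (G *ᵥ x) r ≤ 1) |>.symm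

end Polyhedron

variable {κ : Type*} [Fintype κ]

theorem exists_fin_polyhedron_eq_inter {a b M : ℕ} (h : a + b = M) (G₁ : Matrix (Fin a) κ ℝ)
    (G₂ : Matrix (Fin b) κ ℝ) :
    ∃ G : Matrix (Fin M) κ ℝ, polyhedron G = polyhedron G₁ ∩ polyhedron G₂ :=
  ⟨(fromRows G₁ G₂).reindex (finSumFinEquiv.trans (finCongr h)) (Equiv.refl κ), by
    rw [polyhedron_reindex_rows, polyhedron_fromRows]⟩

theorem exists_fin_polyhedron_eq_of_le {t M : ℕ} (h : t ≤ M) (G : Matrix (Fin t) κ ℝ) :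
    ∃ G' : Matrix (Fin M) κ ℝ, polyhedron G' = polyhedron G := by
  simpa using exists_fin_polyhedron_eq_inter (Nat.add_sub_cancel' h) G 0

theorem exists_polyhedron_of_cyclic {q m N k d j : ℕ} {A : ℕ → Matrix κ κ ℝ}
    {F : ℕ → Matrix (Fin q) κ ℝ} {Ω : ℕ → Set (κ → ℝ)}
    (hcyc : ∀ j < N, Ω j = polyhedron (F j) ∩ (A j *ᵥ ·) ⁻¹' Ω ((j + 1) % N))
    {H : Matrix (Fin m) κ ℝ} (hΩk : Ω k = polyhedron H) (hj : j < N) (hjk : (j + d) % N = k) :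
    ∃ G : Matrix (Fin (m + q * d)) κ ℝ, Ω j = polyhedron G := by
  induction d generalizing j with
  | zero =>
    rw [Nat.add_zero, Nat.mod_eq_of_lt hj] at hjk
    exact ⟨H, hjk ▸ hΩk⟩
  | succ d ih =>
    have hnext : ((j + 1) % N + d) % N = k := by
      rwa [Nat.mod_add_mod, Nat.add_right_comm, Nat.add_assoc]
    obtain ⟨G, hG⟩ := ih (Nat.mod_lt _ (Nat.zero_lt_of_lt hj)) hnext
    obtain ⟨G', hG'⟩ :=
      exists_fin_polyhedron_eq_inter (by ring : q + (m + q * d) = m + q * (d + 1)) (F j) (G * A j)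
    refine ⟨G', ?_⟩
    rw [hcyc j hj, hG, hG', polyhedron_mul]

end Matrix

/-- If one set `Ω_k` in the cyclic family of maximal output admissible sets is a polyhedron
`{x : H x ≤ 1}` with `H` having `m` rows, then every `Ω_i`, `i < N`, is a polyhedron
determined by at most `m + (N−1) q` inequalities, where `q` bounds the rows of each `S_j`. -/
theorem stmt15 {n p q m N : ℕ}
    (A : ℕ → Matrix (Fin n) (Fin n) ℝ) (C : ℕ → Matrix (Fin p) (Fin n) ℝ)
    (S : ℕ → Matrix (Fin q) (Fin p) ℝ) (Ω : ℕ → Set (Fin n → ℝ))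
    (hcyc : ∀ j < N, ∀ x : Fin n → ℝ,
      x ∈ Ω j ↔ (∀ i, (S j *ᵥ (C j *ᵥ x)) i ≤ 1) ∧ A j *ᵥ x ∈ Ω ((j + 1) % N))
    (k : ℕ) (hk : k < N) (H : Matrix (Fin m) (Fin n) ℝ)
    (hΩk : Ω k = {x | ∀ i, (H *ᵥ x) i ≤ 1}) :
    ∀ i < N, ∃ Hi : Matrix (Fin (m + (N - 1) * q)) (Fin n) ℝ,
      Ω i = {x | ∀ r, (Hi *ᵥ x) r ≤ 1} := by
  have hΩ_step : ∀ j < N, Ω j = polyhedron (S j * C j) ∩ (A j *ᵥ ·) ⁻¹' Ω ((j + 1) % N) :=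
    fun j hj => Set.ext fun x => by simp [hcyc j hj x, mulVec_mulVec]
  intro i hi
  set d := (k + N - i) % N
  have hik : (i + d) % N = k := by
    rw [Nat.add_mod_mod, show i + (k + N - i) = k + N by omega, Nat.add_mod_right,
      Nat.mod_eq_of_lt hk]
  obtain ⟨G, hG⟩ := exists_polyhedron_of_cyclic hΩ_step hΩk hi hik
  have hrows : m + q * d ≤ m + (N - 1) * q := by
    have : d < N := Nat.mod_lt _ (Nat.zero_lt_of_lt hk)
    rw [Nat.mul_comm q]
    gcongr
    omega
  obtain ⟨Hi, hHi⟩ := exists_fin_polyhedron_eq_of_le hrows G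
  exact ⟨Hi, hG.trans hHi.symm⟩
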